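/- arXiv:2605.05641 — 6 statements merged into one kernel-verified Lean document; each statement's English description precedes it below -/
import Mathlib

section
/- Let F be a field containing the complex numbers ℂ (or more generally, F a commutative ring that is an integral domain and a ℂ-algebra with F a field). Let A, B ⊆ F be nonzero finite-dimensional ℂ-linear subspaces, and let AB denote the ℂ-linear span of all products ab with a ∈ A, b ∈ B. Suppose there exists a discrete valuation ν on F that is trivial on ℂ* and such that elements of a ℂ-basis of A can be chosen with pairwise distinct ν-values, and likewise for B. Then dim_ℂ(AB) ≥ dim_ℂ A + dim_ℂ B − 1. -/
/-!
Extend `ν` by `ν 0 = ⊤` to an additive valuation. Since `ν` is trivial on `ℂ`, nonzero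
elements with pairwise distinct `ν`-values are linearly independent: in a vanishing linear
combination the term of least value would be the value of the whole sum. Hence `dim (A * B)`
is at least the number of values `ν` takes on the products `a * b` of basis elements, which
is the sumset `ν(basis of A) + ν(basis of B)` in `ℤ`, and Cauchy–Davenport in `ℤ` bounds its
size from below by `dim A + dim B - 1`.
-/

open Finset Pointwise

theorem Finset.image_mul_eq_add_image {α β : Type*} [DecidableEq α] [DecidableEq β]
    [Mul α] [Add β] {f : α → β} {s t : Finset α}
    (hf : ∀ a ∈ s, ∀ b ∈ t, f (a * b) = f a + f b) :
    (s * t).image f = s.image f + t.image f := by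
  change (image₂ (· * ·) s t).image f = image₂ (· + ·) (s.image f) (t.image f)
  rw [image_image₂, image₂_congr hf, image₂_image_left, image₂_image_right]

theorem Submodule.card_le_finrank_of_linearIndepOn {K M : Type*} [Field K] [AddCommGroup M]
    [Module K M] {V : Submodule K M} [Module.Finite K V] {u : Finset M} (huV : ↑u ⊆ (V : Set M))
    (hu : LinearIndepOn K id (u : Set M)) : u.card ≤ Module.finrank K V :=
  finrank_span_finset_eq_card hu ▸ Submodule.finrank_mono (Submodule.span_le.mpr huV)

namespace AddValuation

theorem linearIndependent_of_injective {K R Γ : Type*} [Field K] [Ring R] [Algebra K R]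
    [LinearOrderedAddCommMonoidWithTop Γ] (v : AddValuation R Γ)
    (hK : ∀ c : K, c ≠ 0 → v (algebraMap K R c) = 0)
    {ι : Type*} {f : ι → R} (hinj : (v ∘ f).Injective) (htop : ∀ i, v (f i) ≠ ⊤) :
    LinearIndependent K f := by
  classical
  rw [linearIndependent_iff']
  intro t g hsum i hi
  by_contra hgi
  set t' := t.filter (g · ≠ 0)
  obtain ⟨j, hj, hmin⟩ := t'.exists_min_image (fun k => v (f k)) ⟨i, by simp [t', hi, hgi]⟩
  have hterm : ∀ k ∈ t', v (g k • f k) = v (f k) := fun k hk => by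
    rw [Algebra.smul_def, v.map_mul, hK _ (mem_filter.mp hk).2, zero_add]
  have hrest : v (g j • f j) < v (∑ k ∈ t'.erase j, g k • f k) := by
    refine hterm j hj ▸ v.map_lt_sum (htop j) fun k hk => ?_
    rw [hterm k (mem_of_mem_erase hk)]
    exact (hmin k (mem_of_mem_erase hk)).lt_of_ne fun h => ne_of_mem_erase hk (hinj h).symm
  have hsum' : g j • f j + ∑ k ∈ t'.erase j, g k • f k = 0 := by
    rw [add_sum_erase t' (fun k => g k • f k) hj, ← hsum]
    exact sum_filter_of_ne fun k _ h hg => h (by rw [hg, zero_smul])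
  have := v.map_add_eq_of_lt_left hrest
  rw [hsum', v.map_zero, hterm j hj] at this
  exact htop j this.symm

variable {R : Type*} [Ring R] [NoZeroDivisors R] [Nontrivial R] (ν : R → ℤ)
  (hmul : ∀ x y : R, x ≠ 0 → y ≠ 0 → ν (x * y) = ν x + ν y)
  (hadd : ∀ x y : R, x ≠ 0 → y ≠ 0 → x + y ≠ 0 → min (ν x) (ν y) ≤ ν (x + y))

open scoped Classical in
noncomputable def ofNonzero : AddValuation R (WithTop ℤ) :=
  AddValuation.of (fun x => if x = 0 then ⊤ else (ν x : WithTop ℤ)) (if_pos rfl)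
    (by
      have h := hmul 1 1 one_ne_zero one_ne_zero
      rw [one_mul] at h
      simp only [one_ne_zero, if_false, WithTop.coe_eq_zero]
      omega)
    (by
      intro x y
      by_cases hx : x = 0
      · simp [hx]
      by_cases hy : y = 0
      · simp [hy]
      by_cases hxy : x + y = 0
      · simp [hxy]
      simp only [hx, hy, hxy, if_false, ← WithTop.coe_min, WithTop.coe_le_coe]
      exact hadd x y hx hy hxy)
    (by
      intro x y
      by_cases hx : x = 0
      · simp [hx]
      by_cases hy : y = 0
      · simp [hy]
      simp only [hx, hy, mul_ne_zero hx hy, if_false, ← WithTop.coe_add, hmul x y hx hy])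

variable {ν hmul hadd} in
theorem ofNonzero_apply_of_ne_zero {x : R} (hx : x ≠ 0) : ofNonzero ν hmul hadd x = ν x := by
  simp [ofNonzero, hx]

variable {K : Type*} [Field K] [Algebra K R] (hK : ∀ c : K, c ≠ 0 → ν (algebraMap K R c) = 0)
include hmul hadd hK

theorem linearIndepOn_of_injOn {u : Set R} (hu0 : ∀ x ∈ u, x ≠ 0) (hinj : u.InjOn ν) :
    LinearIndepOn K id u := by
  have hv : ∀ x : R, x ≠ 0 → ofNonzero ν hmul hadd x = ν x := fun x hx =>
    ofNonzero_apply_of_ne_zero hx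
  refine (ofNonzero ν hmul hadd).linearIndependent_of_injective
    (fun c hc => by rw [hv _ ((map_ne_zero _).mpr hc), hK c hc, WithTop.coe_zero])
    (fun x y hxy => Subtype.ext (hinj x.2 y.2 ?_)) (fun x => ?_)
  · simpa [hv x (hu0 x x.2), hv y (hu0 y y.2)] using hxy
  · simp [hv x (hu0 x x.2)]

theorem card_image_le_finrank [DecidableEq R] {V : Submodule K R} [Module.Finite K V]
    {s : Finset R} (hsV : ↑s ⊆ (V : Set R)) (hs0 : ∀ x ∈ s, x ≠ 0) :
    (s.image ν).card ≤ Module.finrank K V := by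
  obtain ⟨u, hus, hu_inj, hu_image⟩ :=
    exists_subset_injOn_image_eq_of_surjOn _ (s.image ν)
      (coe_image (f := ν) ▸ Set.surjOn_image ν s)
  rw [← hu_image, card_image_of_injOn hu_inj]
  exact Submodule.card_le_finrank_of_linearIndepOn (hus.trans hsV)
    (linearIndepOn_of_injOn ν hmul hadd hK (fun x hx => hs0 x (hus hx)) hu_inj)

end AddValuation

/-- Product-dimension lemma: if `F` is a field that is a `ℂ`-algebra (hence an integral
domain), `A, B ⊆ F` are nonzero finite-dimensional `ℂ`-subspaces, and there is a discrete
valuation `ν` on `F`, trivial on `ℂ*`, such that `A` and `B` admit `ℂ`-bases whose elements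
have pairwise distinct `ν`-values, then `dim (A*B) ≥ dim A + dim B − 1`. -/
theorem stmt_1 {F : Type*} [Field F] [Algebra ℂ F]
    (A B : Submodule ℂ F) (hA : A ≠ ⊥) (hB : B ≠ ⊥)
    [FiniteDimensional ℂ A] [FiniteDimensional ℂ B]
    (ν : F → ℤ)
    (hνmul : ∀ x y : F, x ≠ 0 → y ≠ 0 → ν (x * y) = ν x + ν y)
    (hνadd : ∀ x y : F, x ≠ 0 → y ≠ 0 → x + y ≠ 0 → min (ν x) (ν y) ≤ ν (x + y))
    (hνℂ : ∀ c : ℂ, c ≠ 0 → ν (algebraMap ℂ F c) = 0)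
    (hbasisA : ∃ s : Finset F, (s : Set F) ⊆ (A : Set F) ∧
      Submodule.span ℂ (s : Set F) = A ∧ s.card = Module.finrank ℂ A ∧
      (∀ x ∈ s, x ≠ 0) ∧ Set.InjOn ν (s : Set F))
    (hbasisB : ∃ s : Finset F, (s : Set F) ⊆ (B : Set F) ∧
      Submodule.span ℂ (s : Set F) = B ∧ s.card = Module.finrank ℂ B ∧
      (∀ x ∈ s, x ≠ 0) ∧ Set.InjOn ν (s : Set F)) :
    Module.finrank ℂ (A * B : Submodule ℂ F) + 1 ≥
      Module.finrank ℂ A + Module.finrank ℂ B := by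
  classical
  obtain ⟨s, hsA, hs_span, hs_card, hs0, hs_inj⟩ := hbasisA
  obtain ⟨t, htB, ht_span, ht_card, ht0, ht_inj⟩ := hbasisB
  have hs : s.Nonempty := nonempty_iff_ne_empty.mpr fun h => hA (by simp [← hs_span, h])
  have ht : t.Nonempty := nonempty_iff_ne_empty.mpr fun h => hB (by simp [← ht_span, h])
  have : Module.Finite ℂ (A * B : Submodule ℂ F) :=
    Module.Finite.iff_fg.mpr
      ((Module.Finite.iff_fg.mp ‹_›).mul (Module.Finite.iff_fg.mp ‹_›))
  have h_dim := AddValuation.card_image_le_finrank ν hνmul hνadd hνℂ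
    (coe_mul s t ▸ (Set.mul_subset_mul hsA htB).trans (Submodule.mul_subset_mul A B))
    (by
      simp only [mem_mul]
      rintro _ ⟨a, ha, b, hb, rfl⟩
      exact mul_ne_zero (hs0 a ha) (ht0 b hb))
  have h_cd := cauchy_davenport_add_of_linearOrder_isCancelAdd (hs.image ν) (ht.image ν)
  rw [← image_mul_eq_add_image fun a ha b hb => hνmul a b (hs0 a ha) (ht0 b hb),
    card_image_of_injOn hs_inj, card_image_of_injOn ht_inj, hs_card, ht_card] at h_cd
  omega
end

section
/- The map sending a pair of coprime integers (r,a) with r > a ≥ 1 to its Hirzebruch–Jung sequence HJ(r,a) is a bijection onto the set of nonempty finite lists [e_1,...,e_n] of integers with every e_i ≥ 2, with inverse given by [e_1,...,e_n] ↦ (det[e_1,...,e_n], det[e_2,...,e_n]). -/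
/-- The continued-fraction determinant of a Hirzebruch–Jung sequence. -/
def hjDet : List ℤ → ℤ
  | [] => 1
  | [e] => e
  | e :: f :: l => e * hjDet (f :: l) - hjDet l

/-- The Hirzebruch–Jung expansion `HJ(r, a)`. -/
def hjSeq : ℕ → ℕ → List ℕ
  | r, a =>
    if h : a ≤ 1 then [r]
    else
      have : (r + a - 1) / a * a - r < a := by
        have h1 : (r + a - 1) / a * a ≤ r + a - 1 := Nat.div_mul_le_self _ _
        omega
      (r + a - 1) / a :: hjSeq a ((r + a - 1) / a * a - r)
  termination_by r a => a


/-!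
Both `HJ` and `det` satisfy the same recursion: `HJ(r, a) = e :: HJ(a, d)` where `r + d = e a`,
`0 ≤ d < a`, and `det (e :: l) = e · det l - det l.tail`. Induction on `a` therefore gives
`det HJ(r, a) = r` and `det (HJ(r, a)).tail = a`, the coprimality of `r, a` keeping `d ≥ 1`.
Conversely, for a nonempty list of entries `≥ 2` one has `0 < det l.tail < det l`, so
`(det l, det l.tail)` is an admissible pair whose first ceiling quotient is the head of `l`;
the pair is coprime because the recursion is unimodular.
-/

lemma hjSeq_of_le_one (r : ℕ) {a : ℕ} (ha : a ≤ 1) : hjSeq r a = [r] := by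
  rw [hjSeq, dif_pos ha]

lemma hjSeq_ne_nil (r a : ℕ) : hjSeq r a ≠ [] := by
  rw [hjSeq]; split_ifs <;> simp

/-- `e = ⌈r / a⌉` and `d = e a - r` are characterised by `r + d = e a` and `d < a`. -/
lemma hjSeq_eq_cons {r a e d : ℕ} (ha : 1 < a) (hd : d < a) (h : r + d = e * a) :
    hjSeq r a = e :: hjSeq a d := by
  obtain rfl : e = (r + a - 1) / a := by
    rw [show r + a - 1 = (a - 1 - d) + a * e by rw [mul_comm]; omega,
      Nat.add_mul_div_left _ _ (by omega), Nat.div_eq_of_lt (by omega), zero_add]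
  obtain rfl : d = (r + a - 1) / a * a - r := by omega
  rw [hjSeq, dif_neg (by omega)]

lemma exists_hjSeq_eq_cons (r : ℕ) {a : ℕ} (ha : 1 < a) :
    ∃ e d, d < a ∧ r + d = e * a ∧ hjSeq r a = e :: hjSeq a d := by
  have hdiv := Nat.div_add_mod (r + a - 1) a
  have hmod := Nat.mod_lt (r + a - 1) (by omega : 0 < a)
  have hd : r + (a - 1 - (r + a - 1) % a) = (r + a - 1) / a * a := by rw [mul_comm]; omega
  exact ⟨_, _, by omega, hd, hjSeq_eq_cons ha (by omega) hd⟩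

lemma coprime_of_add_eq_mul {r a d e : ℕ} (hcop : r.Coprime a) (h : r + d = e * a) :
    a.Coprime d := by
  have hr : a.gcd d ∣ r :=
    (Nat.dvd_add_left (Nat.gcd_dvd_right a d)).mp (h ▸ dvd_mul_of_dvd_right (Nat.gcd_dvd_left a d) e)
  exact Nat.eq_one_of_dvd_one (hcop ▸ Nat.dvd_gcd hr (Nat.gcd_dvd_left a d))

lemma two_le_of_mem_hjSeq {r a : ℕ} (har : a < r) (hr : 2 ≤ r) : ∀ e ∈ hjSeq r a, 2 ≤ e := by
  induction a using Nat.strong_induction_on generalizing r with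
  | _ a ih =>
  rcases le_or_gt a 1 with ha | ha
  · simpa [hjSeq_of_le_one r ha] using hr
  obtain ⟨e, d, hda, hrd, hseq⟩ := exists_hjSeq_eq_cons r ha
  have he : 1 < e := Nat.lt_of_mul_lt_mul_right (a := a) (by omega)
  rw [hseq]
  exact List.forall_mem_cons.mpr ⟨he, ih d hda hda ha⟩

lemma hjDet_cons_cons (e f : ℤ) (l : List ℤ) :
    hjDet (e :: f :: l) = e * hjDet (f :: l) - hjDet l := rfl

lemma isCoprime_hjDet_tail (l : List ℤ) : IsCoprime (hjDet l) (hjDet l.tail) := by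
  induction l using hjDet.induct with
  | case1 => exact isCoprime_one_left
  | case2 e => exact isCoprime_one_right
  | case3 e f l ih _ =>
    obtain ⟨u, v, h⟩ := ih
    rw [List.tail_cons] at h
    exact ⟨-v, u + v * e, by rw [List.tail_cons, hjDet_cons_cons]; linear_combination h⟩

lemma hjDet_tail_pos_and_lt {l : List ℤ} (hl : l ≠ []) (h2 : ∀ e ∈ l, 2 ≤ e) :
    0 < hjDet l.tail ∧ hjDet l.tail < hjDet l := by
  induction l using hjDet.induct with
  | case1 => exact absurd rfl hl
  | case2 e =>
    have he := h2 e (List.mem_singleton_self e)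
    simp only [List.tail_cons, hjDet]
    omega
  | case3 e f l ih _ =>
    rw [List.forall_mem_cons] at h2
    obtain ⟨hpos, hlt⟩ := ih (List.cons_ne_nil f l) h2.2
    rw [List.tail_cons] at hpos hlt ⊢
    refine ⟨hpos.trans hlt, ?_⟩
    rw [hjDet_cons_cons]
    nlinarith [mul_nonneg (sub_nonneg.mpr h2.1) (hpos.trans hlt).le]

lemma hjDet_map_tail_pos_and_lt {l : List ℕ} (hl : l ≠ []) (h2 : ∀ e ∈ l, 2 ≤ e) :
    0 < hjDet (l.map (↑)).tail ∧ hjDet (l.map (↑)).tail < hjDet (l.map (↑)) :=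
  hjDet_tail_pos_and_lt (by simpa using hl)
    (List.forall_mem_map.mpr fun x hx => by exact_mod_cast h2 x hx)

lemma hjDet_hjSeq {r a : ℕ} (hcop : r.Coprime a) (ha : 1 ≤ a) (har : a < r) :
    hjDet ((hjSeq r a).map (↑)) = r ∧ hjDet ((hjSeq r a).map (↑)).tail = a := by
  induction a using Nat.strong_induction_on generalizing r with
  | _ a ih =>
  rcases le_or_gt a 1 with ha1 | ha1
  · obtain rfl : a = 1 := by omega
    simp [hjSeq_of_le_one r ha1, hjDet]
  obtain ⟨e, d, hda, hrd, hseq⟩ := exists_hjSeq_eq_cons r ha1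
  have hcop' := coprime_of_add_eq_mul hcop hrd
  have hd : 1 ≤ d := Nat.pos_of_ne_zero fun hd0 => by
    rw [hd0, Nat.coprime_zero_right] at hcop'; omega
  obtain ⟨hdetr, hdeta⟩ := ih d hda hcop' hd hda
  obtain ⟨f, l, hfl⟩ := List.exists_cons_of_ne_nil (hjSeq_ne_nil a d)
  rw [hfl] at hdetr hdeta
  rw [hseq, hfl]
  simp only [List.map_cons, List.tail_cons, hjDet_cons_cons] at hdetr hdeta ⊢
  refine ⟨?_, hdetr⟩
  rw [hdetr, hdeta]
  have := congrArg (Nat.cast : ℕ → ℤ) hrd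
  push_cast at this
  linarith

lemma hjSeq_eq_of_hjDet {l : List ℕ} (hl : l ≠ []) (h2 : ∀ e ∈ l, 2 ≤ e) {r a : ℕ}
    (hr : hjDet (l.map (↑)) = r) (ha : hjDet (l.map (↑)).tail = a) : hjSeq r a = l := by
  induction l generalizing r a with
  | nil => exact absurd rfl hl
  | cons e l ih =>
  rw [List.forall_mem_cons] at h2
  rcases l with _ | ⟨f, l⟩
  · simp only [List.map_cons, List.map_nil, List.tail_cons, hjDet, Nat.cast_inj] at hr ha
    rw [← hr, hjSeq_of_le_one e (by omega)]
  obtain ⟨hpos, hlt⟩ := hjDet_map_tail_pos_and_lt (List.cons_ne_nil f l) h2.2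
  obtain ⟨d, hd⟩ := Int.eq_ofNat_of_zero_le hpos.le
  simp only [List.map_cons, List.tail_cons, hjDet_cons_cons] at hr ha hpos hlt hd ⊢
  rw [ha, hd] at hlt hr
  have hrd : r + d = e * a := by exact_mod_cast (by linarith : (r : ℤ) + d = e * a)
  rw [hjSeq_eq_cons (by omega) (by exact_mod_cast hlt) hrd,
    ih (List.cons_ne_nil f l) h2.2 (by simpa using ha) (by simpa using hd)]

def hjDetPair (l : List ℕ) : ℕ × ℕ :=
  ((hjDet (l.map (↑))).toNat, (hjDet (l.map (↑)).tail).toNat)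

lemma hjDetPair_hjSeq {r a : ℕ} (hcop : r.Coprime a) (ha : 1 ≤ a) (har : a < r) :
    hjDetPair (hjSeq r a) = (r, a) := by
  obtain ⟨hr, ha⟩ := hjDet_hjSeq hcop ha har
  simp [hjDetPair, hr, ha]

lemma hjSeq_hjDetPair {l : List ℕ} (hl : l ≠ []) (h2 : ∀ e ∈ l, 2 ≤ e) :
    hjSeq (hjDetPair l).1 (hjDetPair l).2 = l := by
  obtain ⟨hpos, hlt⟩ := hjDet_map_tail_pos_and_lt hl h2
  exact hjSeq_eq_of_hjDet hl h2 (Int.toNat_of_nonneg (by omega)).symm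
    (Int.toNat_of_nonneg hpos.le).symm

lemma hjDetPair_spec {l : List ℕ} (hl : l ≠ []) (h2 : ∀ e ∈ l, 2 ≤ e) :
    (hjDetPair l).1.Coprime (hjDetPair l).2 ∧ 1 ≤ (hjDetPair l).2 ∧
      (hjDetPair l).2 < (hjDetPair l).1 := by
  obtain ⟨hpos, hlt⟩ := hjDet_map_tail_pos_and_lt hl h2
  refine ⟨Nat.isCoprime_iff_coprime.mp ?_, by simp [hjDetPair]; omega, by simp [hjDetPair]; omega⟩
  rw [hjDetPair, Int.toNat_of_nonneg (by omega), Int.toNat_of_nonneg hpos.le]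
  exact isCoprime_hjDet_tail _

/-- `l.map (fun e => (e : ℤ))` elaborates by first coercing `l` to `List ℤ` through the list monad
and then mapping the identity; this brings it back to `l.map (↑)`. -/
lemma map_fun_intCast_eq (l : List ℕ) : l.map (fun e => (e : ℤ)) = l.map (↑) := by
  simp [List.map_eq_flatMap]

/-- `(r, a) ↦ HJ(r, a)` is a bijection from coprime pairs `r > a ≥ 1` onto nonempty
lists of integers `≥ 2`, with inverse `l ↦ (det l, det l.tail)`. -/
theorem stmt_5 :
    Set.BijOn (fun p : ℕ × ℕ => hjSeq p.1 p.2)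
      {p : ℕ × ℕ | Nat.Coprime p.1 p.2 ∧ 1 ≤ p.2 ∧ p.2 < p.1}
      {l : List ℕ | l ≠ [] ∧ ∀ e ∈ l, 2 ≤ e} ∧
    ∀ l : List ℕ, l ≠ [] → (∀ e ∈ l, 2 ≤ e) →
      hjSeq (hjDet (l.map (fun e => (e : ℤ)))).toNat
            (hjDet ((l.map (fun e => (e : ℤ))).tail)).toNat = l := by
  refine ⟨Set.InvOn.bijOn (f' := hjDetPair) ⟨?_, ?_⟩ ?_ ?_, fun l hl h2 => ?_⟩
  · rintro ⟨r, a⟩ ⟨hcop, ha, har⟩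
    exact hjDetPair_hjSeq hcop ha har
  · rintro l ⟨hl, h2⟩
    exact hjSeq_hjDetPair hl h2
  · rintro ⟨r, a⟩ ⟨hcop, ha, har⟩
    exact ⟨hjSeq_ne_nil r a, two_le_of_mem_hjSeq har (by omega)⟩
  · rintro l ⟨hl, h2⟩
    exact hjDetPair_spec hl h2
  · rw [map_fun_intCast_eq]
    exact hjSeq_hjDetPair hl h2
end

section
/- Let r > q ≥ 1 be coprime integers with r − q ≥ 2. Write r = u(r−q) + q' with 0 ≤ q' < r − q and u ≥ 1, and set r' := (r−q) + q'. Then q' ≥ 1 would give gcd(r', q') = 1 and r' ≥ 2q' + 1; in particular, if q' ≥ 1 then the first entry of HJ(r', q') is ⌈r'/q'⌉ ≥ 3, and HJ(r, q) equals the concatenation of (u−1) copies of 2 followed by HJ(r', q'). -/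
/-!
Put `d = r − q`, so that `r = u d + q'` and `q = (u − 1) d + q'`. Whenever `1 ≤ d ≤ a`, the
first step of the expansion of `(a + d, a)` has `⌈(a + d)/a⌉ = 2` and leaves `(a, a − d)`; so the
expansion of `(k d + q', (k − 1) d + q')` emits a `2` and passes to `((k − 1) d + q', (k − 2) d + q')`,
until `k = 1` leaves `(d + q', q')`. Coprimality is preserved because subtracting multiples of `d`
does not change `gcd`, and `q' < d` gives `⌈(d + q')/q'⌉ ≥ 3`.
-/

theorem hjSeq_of_two_le (r : ℕ) {a : ℕ} (ha : 2 ≤ a) :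
    hjSeq r a = (r + a - 1) / a :: hjSeq a ((r + a - 1) / a * a - r) := by
  rw [hjSeq, dif_neg (by omega)]

theorem hjSeq_head? (r : ℕ) {a : ℕ} (ha : 1 ≤ a) :
    (hjSeq r a).head? = some ((r + a - 1) / a) := by
  rcases ha.eq_or_lt with rfl | ha
  · simp [hjSeq]
  · simp [hjSeq_of_two_le r ha]

theorem hjSeq_add_of_le {a d : ℕ} (ha : 2 ≤ a) (hd : 1 ≤ d) (hda : d ≤ a) :
    hjSeq (a + d) a = 2 :: hjSeq a (a - d) := by
  have hceil : (a + d + a - 1) / a = 2 := Nat.div_eq_of_lt_le (by omega) (by omega)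
  rw [hjSeq_of_two_le _ ha, hceil]
  congr 2
  omega

theorem hjSeq_succ_mul_add (n : ℕ) {d c : ℕ} (hd : 1 ≤ d) (hdc : 2 ≤ d + c) :
    hjSeq ((n + 1) * d + c) (n * d + c) = List.replicate n 2 ++ hjSeq (d + c) c := by
  induction n with
  | zero => simp
  | succ n ih =>
    have hstep := hjSeq_add_of_le (a := (n + 1) * d + c) (by rw [add_one_mul]; omega) hd
      (by rw [add_one_mul]; omega)
    rw [show (n + 1 + 1) * d + c = (n + 1) * d + c + d by ring, hstep,
      show (n + 1) * d + c - d = n * d + c by rw [add_one_mul]; omega, ih,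
      List.replicate_succ, List.cons_append]

theorem stmt_7_general (r q u q' : ℕ) (hco : Nat.Coprime r q)
    (hq'lt : q' < r - q)
    (heq : r = u * (r - q) + q') (hq'1 : 1 ≤ q') :
    Nat.Coprime ((r - q) + q') q' ∧
    2 * q' + 1 ≤ (r - q) + q' ∧
    (hjSeq ((r - q) + q') q').head? = some ((((r - q) + q') + q' - 1) / q') ∧
    3 ≤ (((r - q) + q') + q' - 1) / q' ∧
    hjSeq r q = List.replicate (u - 1) 2 ++ hjSeq ((r - q) + q') q' := by
  set d := r - q with hd
  have hu : u ≠ 0 := by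
    rintro rfl
    rw [zero_mul] at heq
    omega
  obtain ⟨n, rfl⟩ := Nat.exists_eq_add_one_of_ne_zero hu
  have hr : r = d + q := by omega
  have hq : q = n * d + q' := by rw [add_one_mul] at heq; omega
  have hcop : Nat.Coprime (d + q') q' := by
    rw [hr, Nat.coprime_add_self_left, hq, Nat.coprime_mul_right_add_right] at hco
    exact Nat.coprime_add_self_left.mpr hco
  refine ⟨hcop, by omega, hjSeq_head? _ hq'1, ?_, ?_⟩
  · exact (Nat.le_div_iff_mul_le hq'1).mpr (by omega)
  · rw [Nat.add_sub_cancel, heq, hq]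
    exact hjSeq_succ_mul_add n (by omega) (by omega)

/-- Let `r > q ≥ 1` be coprime with `r − q ≥ 2`, write `r = u(r−q) + q'` with
`0 ≤ q' < r−q`, `u ≥ 1`, and set `r' = (r−q) + q'`. If `q' ≥ 1` then `gcd(r',q') = 1`,
`r' ≥ 2q' + 1`, the first entry of `HJ(r',q')` is `⌈r'/q'⌉ ≥ 3`, and `HJ(r,q)` is the
concatenation of `u−1` copies of `2` followed by `HJ(r',q')`. -/
theorem stmt_7 (r q u q' : ℕ) (hco : Nat.Coprime r q) (hq : 1 ≤ q) (hrq : q < r)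
    (h2 : 2 ≤ r - q) (hu : 1 ≤ u) (hq'lt : q' < r - q)
    (heq : r = u * (r - q) + q') (hq'1 : 1 ≤ q') :
    Nat.Coprime ((r - q) + q') q' ∧
    2 * q' + 1 ≤ (r - q) + q' ∧
    (hjSeq ((r - q) + q') q').head? = some ((((r - q) + q') + q' - 1) / q') ∧
    3 ≤ (((r - q) + q') + q' - 1) / q' ∧
    hjSeq r q = List.replicate (u - 1) 2 ++ hjSeq ((r - q) + q') q' :=
  stmt_7_general r q u q' hco hq'lt heq hq'1
end

section
/- Let a be a positive rational number and let r_1, r_2, q_1, q_2 be positive integers with q_1 ≤ r_2, a ≤ (r_2 + q_1)/(r_1·r_2 − q_1·q_2), and suppose e is an integer with e ≥ 3 and (e−1)q_1 + 1 ≤ r_1 ≤ e·q_1 − 1, and r_2 ≥ q_2 + 1. Then 1/a ≥ 1 + (e − 2)·q_1/2. In particular q_1 ≤ 2(1/a − 1)/(e − 2) and both q_1 and e are bounded in terms of a. -/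
/-! The quantity `1/mld = (r₁r₂ − q₁q₂)/(r₂ + q₁)` exceeds `1 + (e − 2)q₁/2` by a sum of
three nonnegative terms, coming from `r₁ ≥ (e − 1)q₁ + 1`, `r₂ ≥ q₂ + 1` and `r₂ ≥ q₁`. -/

section OrderedRing

variable {R : Type*} [CommRing R] [LinearOrder R] [IsStrictOrderedRing R]

theorem two_add_mul_mul_add_le_two_mul_sub_mul {r₁ r₂ q₁ q₂ e : R} (hq₁ : 0 ≤ q₁) (he : 2 ≤ e)
    (hq₁r₂ : q₁ ≤ r₂) (hr₁ : (e - 1) * q₁ + 1 ≤ r₁) (hr₂ : q₂ + 1 ≤ r₂) :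
    (2 + (e - 2) * q₁) * (r₂ + q₁) ≤ 2 * (r₁ * r₂ - q₁ * q₂) := by
  have hdiff : 2 * (r₁ * r₂ - q₁ * q₂) - (2 + (e - 2) * q₁) * (r₂ + q₁) =
      2 * (r₁ - ((e - 1) * q₁ + 1)) * r₂ + 2 * q₁ * (r₂ - q₂ - 1) + (e - 2) * q₁ * (r₂ - q₁) := by
    ring
  have hr₂₀ : 0 ≤ r₂ := hq₁.trans hq₁r₂
  have hnonneg : 0 ≤ 2 * (r₁ - ((e - 1) * q₁ + 1)) * r₂ + 2 * q₁ * (r₂ - q₂ - 1) +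
      (e - 2) * q₁ * (r₂ - q₁) := by
    refine add_nonneg (add_nonneg ?_ ?_) ?_
    · exact mul_nonneg (mul_nonneg zero_le_two (sub_nonneg.2 hr₁)) hr₂₀
    · exact mul_nonneg (mul_nonneg zero_le_two hq₁) (by linarith)
    · exact mul_nonneg (mul_nonneg (sub_nonneg.2 he) hq₁) (sub_nonneg.2 hq₁r₂)
  exact sub_nonneg.1 (hdiff ▸ hnonneg)

end OrderedRing

section OrderedField

variable {K : Type*} [Field K] [LinearOrder K] [IsStrictOrderedRing K]

theorem le_one_div_of_le_div_of_mul_le {a c n d : K} (ha : 0 < a) (hc : 0 < c) (hn : 0 < n)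
    (hcn : c * n ≤ d) (had : a ≤ n / d) : c ≤ 1 / a := by
  have hd : 0 < d := (mul_pos hc hn).trans_le hcn
  have hnd : n / d ≤ 1 / c := by
    rw [div_le_div_iff₀ hd hc]
    linarith
  exact (le_one_div ha hc).1 (had.trans hnd)

end OrderedField

theorem stmt_8_general (a : ℚ) (ha : 0 < a) (r1 r2 q1 q2 e : ℤ)
    (hq1 : 0 < q1) (hq1r2 : q1 ≤ r2) (he : 3 ≤ e)
    (hlo : (e - 1) * q1 + 1 ≤ r1) (hr2q2 : q2 + 1 ≤ r2)
    (hmld : a ≤ ((r2 + q1 : ℤ) : ℚ) / ((r1 * r2 - q1 * q2 : ℤ) : ℚ)) :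
    1 / a ≥ 1 + ((e - 2 : ℤ) : ℚ) * (q1 : ℚ) / 2 ∧
    (q1 : ℚ) ≤ 2 * (1 / a - 1) / ((e : ℚ) - 2) := by
  have hq1' : (0 : ℚ) < q1 := by exact_mod_cast hq1
  have he' : (3 : ℚ) ≤ e := by exact_mod_cast he
  have hn : (0 : ℚ) < r2 + q1 := by exact_mod_cast (by omega : 0 < r2 + q1)
  have hc : (0 : ℚ) < 1 + ((e : ℚ) - 2) * q1 / 2 := by
    have := mul_pos (by linarith : (0 : ℚ) < e - 2) hq1'
    linarith
  have hkey : (2 + ((e : ℚ) - 2) * q1) * (r2 + q1) ≤ 2 * (r1 * r2 - q1 * q2) := by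
    exact_mod_cast two_add_mul_mul_add_le_two_mul_sub_mul hq1.le (by omega) hq1r2 hlo hr2q2
  push_cast at hmld ⊢
  have hbound : 1 + ((e : ℚ) - 2) * q1 / 2 ≤ 1 / a :=
    le_one_div_of_le_div_of_mul_le ha hc hn (by linarith) hmld
  refine ⟨hbound, ?_⟩
  rw [le_div_iff₀ (by linarith)]
  linarith

/-- Key numerical estimate for the mld algorithm: if `a ≤ (r₂ + q₁)/(r₁r₂ − q₁q₂)` with
`q₁ ≤ r₂`, `e ≥ 3`, `(e−1)q₁ + 1 ≤ r₁ ≤ e·q₁ − 1`, `r₂ ≥ q₂ + 1`, then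
`1/a ≥ 1 + (e−2)q₁/2`; in particular `q₁ ≤ 2(1/a − 1)/(e−2)`. -/
theorem stmt_8 (a : ℚ) (ha : 0 < a) (r1 r2 q1 q2 e : ℤ)
    (hr1 : 0 < r1) (hr2 : 0 < r2) (hq1 : 0 < q1) (hq2 : 0 < q2)
    (hq1r2 : q1 ≤ r2) (he : 3 ≤ e)
    (hlo : (e - 1) * q1 + 1 ≤ r1) (hhi : r1 ≤ e * q1 - 1)
    (hr2q2 : q2 + 1 ≤ r2)
    (hmld : a ≤ ((r2 + q1 : ℤ) : ℚ) / ((r1 * r2 - q1 * q2 : ℤ) : ℚ)) :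
    1 / a ≥ 1 + ((e - 2 : ℤ) : ℚ) * (q1 : ℚ) / 2 ∧
    (q1 : ℚ) ≤ 2 * (1 / a - 1) / ((e : ℚ) - 2) :=
  stmt_8_general a ha r1 r2 q1 q2 e hq1 hq1r2 he hlo hr2q2 hmld
end

section
/- Let V and W be finite-dimensional complex vector spaces of sections with a bilinear multiplication map μ: V × W → U into a third complex vector space U, such that μ(v,w) = 0 implies v = 0 or w = 0 (i.e., U, V, W are subspaces of a field and μ is field multiplication). If dim V = P_a and dim W = P_b with P_a, P_b ≥ 1, and the image span has dimension at most P_{a+b} := dim of the target containing the image, then P_{a+b} ≥ P_a + P_b − 1. Concretely, in the setting where V, W are ℂ-subspaces of the function field ℂ(t) of the affine line and U = V·W is their product span: dim_ℂ(V·W) ≥ dim_ℂ V + dim_ℂ W − 1. -/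
/-!
Expand rational functions as Laurent series at `t = 0`. In a finite-dimensional space `V` of Hahn
series over a field, nonzero elements with distinct orders are linearly independent, while an
element whose coefficients vanish at every order attained on `V \ {0}` must be zero; hence
`dim V` is the number of orders attained. Orders add under multiplication, so the orders attained
on `V·W` contain the sumset of those of `V` and `W`, and the Cauchy–Davenport bound
`|A + B| ≥ |A| + |B| - 1` for finite subsets of an ordered cancellative monoid finishes the proof.
-/

open Module
open scoped LaurentSeries RatFunc Pointwise

theorem Set.ncard_add_ncard_le_ncard_add_add_one {α : Type*} [LinearOrder α] [AddCommMonoid α]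
    [IsOrderedCancelAddMonoid α] {s t : Set α} (hs : s.Finite) (ht : t.Finite)
    (hs₀ : s.Nonempty) (ht₀ : t.Nonempty) : s.ncard + t.ncard ≤ (s + t).ncard + 1 := by
  classical
  rw [ncard_eq_toFinset_card s hs, ncard_eq_toFinset_card t ht,
    ncard_eq_toFinset_card _ (hs.add ht), Finite.toFinset_add hs ht]
  have := cauchy_davenport_add_of_linearOrder_isCancelAdd (hs.toFinset_nonempty.mpr hs₀)
    (ht.toFinset_nonempty.mpr ht₀)
  omega

instance Submodule.finite_mul {R A : Type*} [CommSemiring R] [Semiring A] [Algebra R A]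
    (M N : Submodule R A) [Module.Finite R M] [Module.Finite R N] : Module.Finite R (M * N) :=
  Module.Finite.iff_fg.mpr ((Module.Finite.iff_fg.mp ‹_›).mul (Module.Finite.iff_fg.mp ‹_›))

namespace HahnSeries

section LinearIndependent

variable {Γ R : Type*} [LinearOrder Γ] [Zero Γ] [Ring R] [NoZeroDivisors R]

theorem linearIndependent_of_injective_order {ι : Type*} {x : ι → HahnSeries Γ R}
    (hx : ∀ i, x i ≠ 0) (hord : Function.Injective fun i => (x i).order) :
    LinearIndependent R x := by
  classical
  rw [linearIndependent_iff']
  intro s c hsum i hi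
  by_contra hci
  obtain ⟨j, hj, hmin⟩ := (s.filter (c · ≠ 0)).exists_min_image (fun i => (x i).order)
    ⟨i, Finset.mem_filter.mpr ⟨hi, hci⟩⟩
  rw [Finset.mem_filter] at hj
  have hcoeff := congrArg (fun y => y.coeff (x j).order) hsum
  simp only [coeff_sum, coeff_smul, coeff_zero, smul_eq_mul] at hcoeff
  rw [Finset.sum_eq_single j ?_ (fun h => absurd hj.1 h)] at hcoeff
  · exact mul_ne_zero hj.2 (coeff_order_eq_zero.not.mpr (hx j)) hcoeff
  intro k hk hkj
  by_cases hck : c k = 0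
  · rw [hck, zero_mul]
  have hlt : (x j).order < (x k).order :=
    (hmin k (Finset.mem_filter.mpr ⟨hk, hck⟩)).lt_of_ne (hord.ne hkj.symm)
  rw [coeff_eq_zero_of_lt_order hlt, mul_zero]

end LinearIndependent

section OrderSet

variable {Γ K : Type*} [LinearOrder Γ] [Field K]

section Zero

variable [Zero Γ] (V : Submodule K (HahnSeries Γ K))

def orderSet : Set Γ := {g | ∃ x ∈ V, x ≠ 0 ∧ x.order = g}

theorem orderSet_nonempty {V : Submodule K (HahnSeries Γ K)} (hV : V ≠ ⊥) :
    (orderSet V).Nonempty :=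
  let ⟨x, hxV, hx0⟩ := V.exists_mem_ne_zero_of_ne_bot hV
  ⟨x.order, x, hxV, hx0, rfl⟩

theorem exists_linearIndependent_orderSet :
    ∃ x : orderSet V → V, LinearIndependent K x := by
  choose x hxV hx0 hxord using fun d : orderSet V => d.2
  have hli : LinearIndependent K x := linearIndependent_of_injective_order hx0
    fun d e hde => Subtype.ext ((hxord d).symm.trans (hde.trans (hxord e)))
  exact ⟨fun d => ⟨x d, hxV d⟩, LinearIndependent.of_comp V.subtype hli⟩

variable [FiniteDimensional K V]

theorem finite_orderSet : (orderSet V).Finite :=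
  let ⟨_, hx⟩ := exists_linearIndependent_orderSet V
  Set.finite_coe_iff.mp hx.finite

theorem ncard_orderSet_le_finrank : (orderSet V).ncard ≤ finrank K V := by
  obtain ⟨_, hx⟩ := exists_linearIndependent_orderSet V
  have := (finite_orderSet V).fintype
  rw [← Nat.card_coe_set_eq, Nat.card_eq_fintype_card]
  exact hx.fintype_card_le_finrank

theorem finrank_le_ncard_orderSet : finrank K V ≤ (orderSet V).ncard := by
  have := (finite_orderSet V).fintype
  let coeffs : V →ₗ[K] (orderSet V → K) :=
    LinearMap.pi fun d => (coeff.linearMap d.1).comp V.subtype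
  have hinj : Function.Injective coeffs := by
    refine (LinearMap.ker_eq_bot (M := V)).mp (LinearMap.ker_eq_bot'.mpr fun x hx => ?_)
    by_contra hx0
    have hx0' : (x : HahnSeries Γ K) ≠ 0 := by simpa using hx0
    exact coeff_order_eq_zero.not.mpr hx0' (congrFun hx ⟨_, x, x.2, hx0', rfl⟩)
  calc finrank K V ≤ finrank K (orderSet V → K) := LinearMap.finrank_le_finrank_of_injective hinj
    _ = (orderSet V).ncard := by
      rw [finrank_fintype_fun_eq_card, ← Nat.card_coe_set_eq, Nat.card_eq_fintype_card]

theorem finrank_eq_ncard_orderSet : finrank K V = (orderSet V).ncard :=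
  (finrank_le_ncard_orderSet V).antisymm (ncard_orderSet_le_finrank V)

end Zero

variable [AddCommMonoid Γ] [IsOrderedCancelAddMonoid Γ]

theorem add_orderSet_subset_orderSet_of_mul_mem {V W U : Submodule K (HahnSeries Γ K)}
    (hmul : ∀ x ∈ V, ∀ y ∈ W, x * y ∈ U) : orderSet V + orderSet W ⊆ orderSet U := by
  rintro _ ⟨_, ⟨x, hxV, hx0, rfl⟩, _, ⟨y, hyW, hy0, rfl⟩, rfl⟩
  exact ⟨x * y, hmul x hxV y hyW, mul_ne_zero hx0 hy0, order_mul hx0 hy0⟩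

theorem finrank_add_finrank_le_finrank_add_one_of_mul_mem {V W U : Submodule K (HahnSeries Γ K)}
    [FiniteDimensional K V] [FiniteDimensional K W] [FiniteDimensional K U]
    (hV : V ≠ ⊥) (hW : W ≠ ⊥) (hmul : ∀ x ∈ V, ∀ y ∈ W, x * y ∈ U) :
    finrank K V + finrank K W ≤ finrank K U + 1 := by
  rw [finrank_eq_ncard_orderSet V, finrank_eq_ncard_orderSet W, finrank_eq_ncard_orderSet U]
  calc _ ≤ (orderSet V + orderSet W).ncard + 1 :=
        Set.ncard_add_ncard_le_ncard_add_add_one (finite_orderSet V) (finite_orderSet W)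
          (orderSet_nonempty hV) (orderSet_nonempty hW)
    _ ≤ (orderSet U).ncard + 1 := by
      gcongr
      exacts [finite_orderSet U, add_orderSet_subset_orderSet_of_mul_mem hmul]

end OrderSet

end HahnSeries

namespace RatFunc

variable (K : Type*) [Field K]

/- Only linearity is recorded: the `K`-module structure underlying `Algebra K K⸨X⸩` is not
definitionally the coefficientwise one used by `Submodule K K⸨X⸩`, which is also why products
enter the Hahn series lemmas through a membership hypothesis rather than as `V * W`. -/
noncomputable def coeLinearMap : RatFunc K →ₗ[K] K⸨X⸩ where
  toFun := algebraMap (RatFunc K) K⸨X⸩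
  map_add' := map_add _
  map_smul' c f := by
    rw [Algebra.smul_def, map_mul, ← HahnSeries.C_mul_eq_smul]
    congr 1
    simp [algebraMap_eq_C, ← algebraMap_C, ← IsScalarTower.algebraMap_apply]

variable {K}

theorem finrank_add_finrank_le_finrank_mul_add_one {V W : Submodule K (RatFunc K)}
    [FiniteDimensional K V] [FiniteDimensional K W] (hV : V ≠ ⊥) (hW : W ≠ ⊥) :
    finrank K V + finrank K W ≤ finrank K (V * W) + 1 := by
  let φ := coeLinearMap K
  have hφ : Function.Injective φ := (algebraMap (RatFunc K) K⸨X⸩).injective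
  have finrank_map (U : Submodule K (RatFunc K)) : finrank K (U.map φ) = finrank K U :=
    (Submodule.equivMapOfInjective φ hφ U).finrank_eq.symm
  have map_ne_bot {U : Submodule K (RatFunc K)} (hU : U ≠ ⊥) : U.map φ ≠ ⊥ := by
    rwa [Ne, ← Submodule.map_bot φ, (Submodule.map_injective_of_injective hφ).eq_iff]
  have hmul : ∀ x ∈ V.map φ, ∀ y ∈ W.map φ, x * y ∈ (V * W).map φ := by
    rintro _ ⟨x, hx, rfl⟩ _ ⟨y, hy, rfl⟩
    exact ⟨x * y, Submodule.mul_mem_mul hx hy, map_mul (algebraMap (RatFunc K) K⸨X⸩) x y⟩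
  have := HahnSeries.finrank_add_finrank_le_finrank_add_one_of_mul_mem
    (map_ne_bot hV) (map_ne_bot hW) hmul
  rwa [finrank_map, finrank_map, finrank_map] at this

end RatFunc

/-- Product-dimension lemma in the function field `ℂ(t)` of the affine line: for nonzero
finite-dimensional `ℂ`-subspaces `V, W ⊆ ℂ(t)`, the span `V·W` of all products satisfies
`dim (V·W) ≥ dim V + dim W − 1`. -/
theorem stmt_18 (V W : Submodule ℂ (RatFunc ℂ)) (hV : V ≠ ⊥) (hW : W ≠ ⊥)
    [FiniteDimensional ℂ V] [FiniteDimensional ℂ W] :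
    Module.finrank ℂ (V * W : Submodule ℂ (RatFunc ℂ)) + 1 ≥
      Module.finrank ℂ V + Module.finrank ℂ W :=
  RatFunc.finrank_add_finrank_le_finrank_mul_add_one hV hW
end

section
/- Let P: ℤ_{≥1} → ℤ be a function satisfying P_n = 1 + (n(n−1)/2)·K + δ_n for all n ≥ 2, where K is a positive rational number and δ: ℤ_{≥2} → ℚ. Suppose P_a ≥ 1 and P_b ≥ 1 for some a, b ≥ 2. If P_{a+b} < P_a + P_b − 1, then the data (K, δ) cannot arise as (K_X^2, δ_n(X)) for any normal integral projective complex surface X with K_X ample and the given plurigenera P_n(X) = h^0(X, nK_X); i.e., the subadditivity-type constraint P_{a+b} ≥ P_a + P_b − 1 (whenever P_a, P_b > 0) is a necessary condition on the plurigenus sequence of any normal integral projective surface. -/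
/-!
Dyson's transform: after scaling `B` so that `1 ∈ B`, for a nonzero `x ∈ A` the pair
`(A ⊔ x • B, B ⊓ x⁻¹ • A)` has the same total dimension as `(A, B)`, a smaller product, and
again `1` in its second member. That member is strictly smaller than `B` for a suitable `x`
unless `y * A ⊆ A` for every `y ∈ B`; over an algebraically closed field such a `y` has an
eigenvector on `A` and is therefore a scalar, so `B = 1`. Induction on `dim B` gives
`dim A + dim B ≤ dim (A * B) + 1`, which applied to `M a * M b ≤ M (a + b)` is the inequality.
-/

open Module
open scoped Pointwise

namespace Submodule

instance finite_mul_s19 {R A : Type*} [CommSemiring R] [Semiring A] [Algebra R A]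
    (M N : Submodule R A) [Module.Finite R M] [Module.Finite R N] : Module.Finite R ↥(M * N) :=
  .of_fg (FG.mul .of_finite .of_finite)

variable {k F : Type*} [Field k] [Field F] [Algebra k F]

instance finite_pointwise_smul (x : F) (p : Submodule k F) [Module.Finite k p] :
    Module.Finite k ↥(x • p) :=
  inferInstanceAs (Module.Finite k ↥(p.map _))

theorem mem_inv_smul_iff_mul_mem {x : F} (hx : x ≠ 0) {p : Submodule k F} {y : F} :
    y ∈ x⁻¹ • p ↔ x * y ∈ p := by
  rw [mem_smul_iff_inv_mul_mem (inv_ne_zero hx), inv_inv]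

theorem finrank_pointwise_smul {x : F} (hx : x ≠ 0) (p : Submodule k F) :
    finrank k ↥(x • p) = finrank k p :=
  (p.equivMapOfInjective _ (smul_right_injective F hx)).finrank_eq.symm

theorem mem_one_of_forall_mul_mem [IsAlgClosed k] {A : Submodule k F} [FiniteDimensional k A]
    (hA : A ≠ ⊥) {c : F} (hc : ∀ x ∈ A, c * x ∈ A) : c ∈ (1 : Submodule k F) := by
  have : Nontrivial A := nontrivial_iff_ne_bot.mpr hA
  obtain ⟨μ, hμ⟩ := End.exists_eigenvalue ((LinearMap.mulLeft k c).restrict hc)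
  obtain ⟨v, hv⟩ := hμ.exists_hasEigenvector
  have hcv : c * v = algebraMap k F μ * v :=
    (congrArg Subtype.val hv.apply_eq_smul).trans (Algebra.smul_def μ (v : F))
  exact mem_one.mpr ⟨μ, (mul_right_cancel₀ (by simpa using hv.2) hcv).symm⟩

section Dyson

variable {A B : Submodule k F} {x : F}

theorem sup_smul_mul_inf_inv_smul_le (hx : x ≠ 0) : (A ⊔ x • B) * (B ⊓ x⁻¹ • A) ≤ A * B := by
  rw [mul_le]
  intro p hp c hc
  obtain ⟨hcB, hcA⟩ := mem_inf.mp hc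
  rw [mem_inv_smul_iff_mul_mem hx] at hcA
  obtain ⟨u, hu, _, ⟨b, hb, rfl⟩, rfl⟩ := mem_sup.mp hp
  have hxbc : x * b * c = x * c * b := by ring
  simp only [DistribSMul.toLinearMap_apply, smul_eq_mul, add_mul, hxbc]
  exact add_mem (mul_mem_mul hu hcB) (mul_mem_mul hcA hb)

theorem finrank_sup_smul_add_finrank_inf_inv_smul [FiniteDimensional k A] [FiniteDimensional k B]
    (hx : x ≠ 0) :
    finrank k ↥(A ⊔ x • B) + finrank k ↥(B ⊓ x⁻¹ • A) =
      finrank k A + finrank k B := by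
  have hinf : B ⊓ x⁻¹ • A = x⁻¹ • (A ⊓ x • B) := by
    ext y
    simp only [mem_inf, mem_inv_smul_iff_mul_mem hx,
      mul_mem_smul_iff (mem_nonZeroDivisors_of_ne_zero hx)]
    exact and_comm
  rw [hinf, finrank_pointwise_smul (inv_ne_zero hx), ← finrank_pointwise_smul hx B]
  exact finrank_sup_add_finrank_inf_eq A (x • B)

end Dyson

variable [IsAlgClosed k]

theorem finrank_add_finrank_le_finrank_mul_add_one_of_one_mem (A B : Submodule k F)
    [FiniteDimensional k A] [FiniteDimensional k B] (hA : A ≠ ⊥) (hB : (1 : F) ∈ B) :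
    finrank k A + finrank k B ≤ finrank k ↥(A * B) + 1 := by
  induction hn : finrank k B using Nat.strong_induction_on generalizing A B with
  | _ n ih =>
  subst hn
  by_cases hB1 : B ≤ 1
  · obtain rfl : B = 1 := le_antisymm hB1 (one_le.mpr hB)
    rw [mul_one, one_eq_span, finrank_span_singleton one_ne_zero]
  obtain ⟨y, hyB, hy1⟩ := SetLike.not_le_iff_exists.mp hB1
  obtain ⟨x, hxA, hyx⟩ : ∃ x ∈ A, y * x ∉ A := by
    by_contra! h
    exact hy1 (mem_one_of_forall_mul_mem hA h)
  have hx : x ≠ 0 := by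
    rintro rfl
    simp at hyx
  have hlt : B ⊓ x⁻¹ • A < B := by
    refine inf_le_left.lt_of_ne fun h ↦ hyx ?_
    have : y ∈ B ⊓ x⁻¹ • A := by rwa [h]
    rwa [mem_inf, and_iff_right hyB, mem_inv_smul_iff_mul_mem hx, mul_comm] at this
  have hA' : A ⊔ x • B ≠ ⊥ := ne_bot_of_le_ne_bot hA le_sup_left
  have hB' : (1 : F) ∈ B ⊓ x⁻¹ • A :=
    ⟨hB, (mem_inv_smul_iff_mul_mem hx).mpr (by rwa [mul_one])⟩
  calc finrank k A + finrank k B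
      = finrank k ↥(A ⊔ x • B) + finrank k ↥(B ⊓ x⁻¹ • A) :=
        (finrank_sup_smul_add_finrank_inf_inv_smul hx).symm
    _ ≤ finrank k ↥((A ⊔ x • B) * (B ⊓ x⁻¹ • A)) + 1 :=
        ih _ (finrank_lt_finrank_of_lt hlt) _ _ hA' hB' rfl
    _ ≤ finrank k ↥(A * B) + 1 := by
        gcongr
        exact finrank_mono (sup_smul_mul_inf_inv_smul_le hx)

theorem finrank_add_finrank_le_finrank_mul_add_one (A B : Submodule k F)
    [FiniteDimensional k A] [FiniteDimensional k B] (hA : A ≠ ⊥) (hB : B ≠ ⊥) :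
    finrank k A + finrank k B ≤ finrank k ↥(A * B) + 1 := by
  obtain ⟨b, hbB, hb⟩ := exists_mem_ne_zero_of_ne_bot hB
  have h1 : (1 : F) ∈ b⁻¹ • B := (mem_inv_smul_iff_mul_mem hb).mpr (by rwa [mul_one])
  have key := finrank_add_finrank_le_finrank_mul_add_one_of_one_mem A _ hA h1
  rwa [mul_smul_comm, finrank_pointwise_smul (inv_ne_zero hb),
    finrank_pointwise_smul (inv_ne_zero hb)] at key

end Submodule

theorem stmt_19_general (P : ℕ → ℤ)
    {F : Type*} [Field F] [Algebra ℂ F]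
    (M : ℕ → Submodule ℂ F)
    (hmul : ∀ m n : ℕ, M m * M n ≤ M (m + n))
    (hdim : ∀ n : ℕ, (Module.finrank ℂ (M n) : ℤ) = P n)
    (hfin : ∀ n : ℕ, FiniteDimensional ℂ (M n))
    (a b : ℕ)
    (hPa : 1 ≤ P a) (hPb : 1 ≤ P b) :
    P (a + b) ≥ P a + P b - 1 := by
  have hne_bot {n : ℕ} (hn : 1 ≤ P n) : M n ≠ ⊥ := by
    rintro h
    have := hdim n
    rw [h, finrank_bot] at this
    omega
  have hprod := Submodule.finrank_add_finrank_le_finrank_mul_add_one (M a) (M b)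
    (hne_bot hPa) (hne_bot hPb)
  have hmono := Submodule.finrank_mono (hmul a b)
  have hPa_eq := hdim a
  have hPb_eq := hdim b
  have hPab_eq := hdim (a + b)
  omega

/-- Necessity of the pluricanonical product-dimension constraint. A plurigenus sequence
`P` of a normal integral projective surface `X` (given by Blache's formula
`P n = 1 + (n(n−1)/2)·K + δ n` with `K = K_X² > 0`) is realized by the pluricanonical
section spaces `M n = H⁰(X, O_X(nK_X))`, which are finite-dimensional `ℂ`-subspaces of
the function field `F` of `X` (a field extension of `ℂ`) satisfying
`M a · M b ⊆ M (a+b)` under multiplication of sections. For any such realization, if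
`P a ≥ 1` and `P b ≥ 1` for some `a, b ≥ 2`, then necessarily
`P (a+b) ≥ P a + P b − 1`; equivalently, data `(K, δ)` whose plurigenera violate this
inequality cannot arise from any such surface. -/
theorem stmt_19 (K : ℚ) (hK : 0 < K) (δ : ℕ → ℚ) (P : ℕ → ℤ)
    (hP : ∀ n : ℕ, 2 ≤ n → (P n : ℚ) = 1 + (n * (n - 1) / 2 : ℚ) * K + δ n)
    {F : Type*} [Field F] [Algebra ℂ F]
    (M : ℕ → Submodule ℂ F)
    (hmul : ∀ m n : ℕ, M m * M n ≤ M (m + n))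
    (hdim : ∀ n : ℕ, (Module.finrank ℂ (M n) : ℤ) = P n)
    (hfin : ∀ n : ℕ, FiniteDimensional ℂ (M n))
    (a b : ℕ) (ha : 2 ≤ a) (hb : 2 ≤ b)
    (hPa : 1 ≤ P a) (hPb : 1 ≤ P b) :
    P (a + b) ≥ P a + P b - 1 :=
  stmt_19_general P M hmul hdim hfin a b hPa hPb
end
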